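/- If p(z) is a complex polynomial of degree n with no zeros in |z| < k where k ≥ 1, then max_{|z|=1} |p'(z)| ≤ (n/(1+k)) · max_{|z|=1} |p(z)|. -/

import Mathlib

open Polynomial

noncomputable def maxMod (p : Polynomial ℂ) (c : ℝ) : ℝ :=
  sSup ((fun z => ‖p.eval z‖) '' {z : ℂ | ‖z‖ = c})

noncomputable def minMod (p : Polynomial ℂ) (c : ℝ) : ℝ :=
  sInf ((fun z => ‖p.eval z‖) '' {z : ℂ | ‖z‖ = c})

noncomputable def polarDeriv (p : Polynomial ℂ) (α : ℂ) : Polynomial ℂ :=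
  C (p.natDegree : ℂ) * p + (C α - X) * derivative p

/-!
Fix `‖z‖ = 1` and put `A = ‖p'(z)‖`, `B = ‖n p(z) - z p'(z)‖` (the polar derivative of `p` with
respect to `0`) and `M = maxMod p 1`. Writing `p'/p = ∑ 1 / (z - r)` over the roots, `A` and `B` are
`‖p(z)‖` times the moduli of `∑ w_r` and `∑ (1 - w_r)`, where `w_r = z / (z - r)` satisfies
`‖1 - w_r‖ = ‖r‖ ‖w_r‖`. Since `{w | κ ‖w‖ ≤ ‖1 - w‖}` (`κ ≥ 1`) and `{w | ‖1 - w‖ ≤ ‖w‖}` are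
convex, roots outside the disk of radius `k` give `k A ≤ B`, and roots in the closed unit disk
give `B ≤ A`.

The second bound, applied to `p - c zⁿ` with `‖c‖ = t M > M` and the argument of `c` aligned with
`p'(z)`, yields `B ≤ |A - t n M|`: the perturbation leaves `B` unchanged and, as
`‖p(ζ)‖ ≤ M ‖ζ‖ⁿ` for `‖ζ‖ ≥ 1` (maximum modulus for the reversed polynomial), moves every root into
the unit disk. Letting `t → 1` gives `B ≤ |A - n M|`, which together with `k A ≤ B` forces
`(1 + k) A ≤ n M`.
-/

theorem Complex.norm_ofReal_sub_sq (c : ℝ) (w : ℂ) :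
    ‖(c : ℂ) - w‖ ^ 2 = c ^ 2 - 2 * c * w.re + ‖w‖ ^ 2 := by
  rw [Complex.sq_norm, Complex.sq_norm, Complex.normSq_sub, Complex.normSq_ofReal,
    Complex.re_ofReal_mul, Complex.conj_re]
  ring

theorem Complex.norm_one_sub_div_sub {z r : ℂ} (hz : ‖z‖ = 1) (hzr : z ≠ r) :
    ‖1 - z / (z - r)‖ = ‖r‖ * ‖z / (z - r)‖ := by
  rw [one_sub_div (sub_ne_zero.2 hzr), sub_sub_cancel_left, norm_div, norm_div, norm_neg, hz,
    mul_one_div]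

section ConvexRegion

open Finset

variable {ι : Type*} {s : Finset ι} {w : ι → ℂ}

theorem mul_norm_sum_le_norm_card_sub_sum {κ : ℝ} (hκ : 1 ≤ κ)
    (h : ∀ i ∈ s, κ * ‖w i‖ ≤ ‖1 - w i‖) :
    κ * ‖∑ i ∈ s, w i‖ ≤ ‖(#s : ℂ) - ∑ i ∈ s, w i‖ := by
  set S := ∑ i ∈ s, w i
  have hterm : ∀ i ∈ s, (κ ^ 2 - 1) * ‖w i‖ ^ 2 ≤ 1 - 2 * (w i).re := by
    intro i hi
    have hsq := pow_le_pow_left₀ (by positivity) (h i hi) 2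
    have h1 := Complex.norm_ofReal_sub_sq 1 (w i)
    push_cast at h1
    nlinarith
  have hsum : (κ ^ 2 - 1) * ∑ i ∈ s, ‖w i‖ ^ 2 ≤ #s - 2 * S.re := by
    calc (κ ^ 2 - 1) * ∑ i ∈ s, ‖w i‖ ^ 2 ≤ ∑ i ∈ s, (1 - 2 * (w i).re) := by
          rw [mul_sum]; exact sum_le_sum hterm
      _ = #s - 2 * S.re := by simp [S, sum_sub_distrib, mul_sum, Complex.re_sum]
  have hCS : ‖S‖ ^ 2 ≤ #s * ∑ i ∈ s, ‖w i‖ ^ 2 :=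
    (pow_le_pow_left₀ (norm_nonneg _) (norm_sum_le _ _) 2).trans sq_sum_le_card_mul_sum_sq
  have hS := Complex.norm_ofReal_sub_sq (#s) S
  push_cast at hS
  rw [← pow_le_pow_iff_left₀ (by positivity) (norm_nonneg _) two_ne_zero, hS]
  have hκ2 : 0 ≤ κ ^ 2 - 1 := by nlinarith
  nlinarith [mul_le_mul_of_nonneg_left hCS hκ2, mul_le_mul_of_nonneg_left hsum (#s).cast_nonneg]

theorem norm_card_sub_sum_le_norm_sum (h : ∀ i ∈ s, ‖1 - w i‖ ≤ ‖w i‖) :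
    ‖(#s : ℂ) - ∑ i ∈ s, w i‖ ≤ ‖∑ i ∈ s, w i‖ := by
  set S := ∑ i ∈ s, w i
  have hterm : ∀ i ∈ s, 1 ≤ 2 * (w i).re := by
    intro i hi
    have hsq := pow_le_pow_left₀ (norm_nonneg _) (h i hi) 2
    have h1 := Complex.norm_ofReal_sub_sq 1 (w i)
    push_cast at h1
    nlinarith
  have hsum : (#s : ℝ) ≤ 2 * S.re := by
    simpa [S, Complex.re_sum, mul_sum] using sum_le_sum hterm
  have hS := Complex.norm_ofReal_sub_sq (#s) S
  push_cast at hS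
  rw [← pow_le_pow_iff_left₀ (norm_nonneg _) (norm_nonneg _) two_ne_zero, hS]
  nlinarith [mul_le_mul_of_nonneg_left hsum (#s).cast_nonneg]

end ConvexRegion

section LogarithmicDerivative

open Finset

variable {p : ℂ[X]} {z : ℂ}

theorem eval_polarDeriv_zero (p : ℂ[X]) (z : ℂ) :
    (polarDeriv p 0).eval z = p.natDegree * p.eval z - z * (derivative p).eval z := by
  simp only [polarDeriv, eval_add, eval_mul, eval_C, eval_sub, eval_X]
  ring

theorem norm_eval_polarDeriv_zero_of_isRoot (hz : ‖z‖ = 1) (hpz : p.IsRoot z) :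
    ‖(polarDeriv p 0).eval z‖ = ‖(derivative p).eval z‖ := by
  rw [eval_polarDeriv_zero, hpz.eq_zero, mul_zero, zero_sub, norm_neg, norm_mul, hz, one_mul]

theorem mul_eval_derivative_eq_sum (hpz : p.eval z ≠ 0) :
    z * (derivative p).eval z = p.eval z * ∑ x ∈ p.roots.toEnumFinset, z / (z - x.1) := by
  have hroots : (p.roots.map fun r => 1 / (z - r)).sum =
      ∑ x ∈ p.roots.toEnumFinset, 1 / (z - x.1) := by
    conv_lhs => rw [← Multiset.map_toEnumFinset_fst p.roots]
    rw [Multiset.map_map, Finset.sum_map_val]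
    rfl
  rw [(IsAlgClosed.splits p).eval_derivative_eq_eval_mul_sum hpz, hroots, mul_left_comm, mul_sum]
  simp only [mul_one_div]

theorem norm_eval_derivative_eq_mul_norm_sum (hz : ‖z‖ = 1) (hpz : p.eval z ≠ 0) :
    ‖(derivative p).eval z‖ = ‖p.eval z‖ * ‖∑ x ∈ p.roots.toEnumFinset, z / (z - x.1)‖ := by
  rw [← norm_mul, ← mul_eval_derivative_eq_sum hpz, norm_mul, hz, one_mul]

theorem norm_eval_polarDeriv_eq_mul_norm_card_sub_sum (hpz : p.eval z ≠ 0) :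
    ‖(polarDeriv p 0).eval z‖ = ‖p.eval z‖ *
      ‖(#p.roots.toEnumFinset : ℂ) - ∑ x ∈ p.roots.toEnumFinset, z / (z - x.1)‖ := by
  rw [← norm_mul, mul_sub, ← mul_eval_derivative_eq_sum hpz, Multiset.card_toEnumFinset,
    splits_iff_card_roots.1 (IsAlgClosed.splits p), eval_polarDeriv_zero, mul_comm]

theorem mul_norm_eval_derivative_le_norm_eval_polarDeriv {κ : ℝ} (hκ : 1 ≤ κ)
    (hroots : ∀ r, p.IsRoot r → κ ≤ ‖r‖) (hz : ‖z‖ = 1) :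
    κ * ‖(derivative p).eval z‖ ≤ ‖(polarDeriv p 0).eval z‖ := by
  by_cases hpz : p.IsRoot z
  · have hκ1 : κ = 1 := le_antisymm (hz ▸ hroots z hpz) hκ
    rw [norm_eval_polarDeriv_zero_of_isRoot hz hpz, hκ1, one_mul]
  rw [norm_eval_derivative_eq_mul_norm_sum hz hpz,
    norm_eval_polarDeriv_eq_mul_norm_card_sub_sum hpz, mul_left_comm]
  gcongr
  refine mul_norm_sum_le_norm_card_sub_sum hκ fun x hx => ?_
  have hr := Multiset.mem_of_mem_toEnumFinset hx
  rw [Complex.norm_one_sub_div_sub hz (fun h => hpz (h ▸ isRoot_of_mem_roots hr))]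
  gcongr
  exact hroots _ (isRoot_of_mem_roots hr)

theorem norm_eval_polarDeriv_le_norm_eval_derivative (hroots : ∀ r, p.IsRoot r → ‖r‖ ≤ 1)
    (hz : ‖z‖ = 1) :
    ‖(polarDeriv p 0).eval z‖ ≤ ‖(derivative p).eval z‖ := by
  by_cases hpz : p.IsRoot z
  · exact (norm_eval_polarDeriv_zero_of_isRoot hz hpz).le
  rw [norm_eval_derivative_eq_mul_norm_sum hz hpz,
    norm_eval_polarDeriv_eq_mul_norm_card_sub_sum hpz]
  gcongr
  refine norm_card_sub_sum_le_norm_sum fun x hx => ?_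
  have hr := Multiset.mem_of_mem_toEnumFinset hx
  rw [Complex.norm_one_sub_div_sub hz (fun h => hpz (h ▸ isRoot_of_mem_roots hr))]
  exact mul_le_of_le_one_left (norm_nonneg _) (hroots _ (isRoot_of_mem_roots hr))

end LogarithmicDerivative

theorem Polynomial.eval_reverse {K : Type*} [Field K] (p : K[X]) {z : K} (hz : z ≠ 0) :
    p.reverse.eval z = z ^ p.natDegree * p.eval z⁻¹ := by
  have := invertibleOfNonzero (inv_ne_zero hz)
  have h := eval₂_reverse_mul_pow (RingHom.id K) z⁻¹ p
  rw [invOf_eq_inv, inv_inv] at h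
  rw [eval, eval, ← h, mul_comm, mul_assoc, ← mul_pow, inv_mul_cancel₀ hz, one_pow, mul_one]

section MaxModulus

variable {p : ℂ[X]}

theorem maxMod_zero (r : ℝ) : maxMod 0 r = 0 :=
  le_antisymm (Real.sSup_nonpos (by simp)) (Real.sSup_nonneg (by simp))

theorem norm_eval_le_maxMod (p : ℂ[X]) {z : ℂ} {r : ℝ} (hz : ‖z‖ = r) :
    ‖p.eval z‖ ≤ maxMod p r := by
  have hsphere : {z : ℂ | ‖z‖ = r} = Metric.sphere 0 r := by ext; simp
  refine le_csSup ?_ ⟨z, hz, rfl⟩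
  rw [hsphere]
  exact ((isCompact_sphere 0 r).image p.continuous.norm).bddAbove

theorem maxMod_le {r c : ℝ} (hr : 0 ≤ r) (h : ∀ z : ℂ, ‖z‖ = r → ‖p.eval z‖ ≤ c) :
    maxMod p r ≤ c :=
  csSup_le ⟨_, r, by simp [hr], rfl⟩ (Set.forall_mem_image.2 fun z hz => h z hz)

theorem norm_eval_reverse_le_maxMod (p : ℂ[X]) {w : ℂ} (hw : ‖w‖ ≤ 1) :
    ‖p.reverse.eval w‖ ≤ maxMod p 1 := by
  refine Complex.norm_le_of_forall_mem_frontier_norm_le Metric.isBounded_ball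
    p.reverse.differentiable.diffContOnCl (fun z hz => ?_)
    (by rwa [closure_ball 0 one_ne_zero, mem_closedBall_zero_iff])
  rw [frontier_ball 0 one_ne_zero, mem_sphere_zero_iff_norm] at hz
  rw [eval_reverse p (norm_ne_zero_iff.1 (hz ▸ one_ne_zero)), norm_mul, norm_pow, hz, one_pow,
    one_mul]
  exact norm_eval_le_maxMod p (by rw [norm_inv, hz, inv_one])

theorem norm_eval_le_maxMod_mul_pow (p : ℂ[X]) {z : ℂ} (hz : 1 ≤ ‖z‖) :
    ‖p.eval z‖ ≤ maxMod p 1 * ‖z‖ ^ p.natDegree := by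
  have hz0 : z ≠ 0 := norm_pos_iff.1 (one_pos.trans_le hz)
  have h := norm_eval_reverse_le_maxMod p (w := z⁻¹)
    (by rw [norm_inv]; exact inv_le_one_of_one_le₀ hz)
  rw [eval_reverse p (inv_ne_zero hz0), inv_inv, norm_mul, norm_pow, norm_inv, inv_pow,
    inv_mul_le_iff₀ (by positivity)] at h
  rwa [mul_comm]

theorem norm_leadingCoeff_le_maxMod (p : ℂ[X]) : ‖p.leadingCoeff‖ ≤ maxMod p 1 := by
  simpa [← coeff_zero_reverse, coeff_zero_eq_eval_zero] using
    norm_eval_reverse_le_maxMod p (w := 0) (by simp)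

theorem maxMod_pos (hp : p ≠ 0) : 0 < maxMod p 1 :=
  (norm_pos_iff.2 (leadingCoeff_ne_zero.2 hp)).trans_le (norm_leadingCoeff_le_maxMod p)

end MaxModulus

section Perturbation

variable {p : ℂ[X]} {c : ℂ}

theorem norm_le_one_of_isRoot_sub_C_mul_X_pow (hc : maxMod p 1 < ‖c‖) {r : ℂ}
    (hr : (p - C c * X ^ p.natDegree).IsRoot r) : ‖r‖ ≤ 1 := by
  by_contra! hr1
  have hpr : p.eval r = c * r ^ p.natDegree := by
    simpa [sub_eq_zero] using hr.eq_zero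
  have := norm_eval_le_maxMod_mul_pow p hr1.le
  rw [hpr, norm_mul, norm_pow] at this
  have : 0 < ‖r‖ ^ p.natDegree := by positivity
  nlinarith

theorem natDegree_sub_C_mul_X_pow (hc : maxMod p 1 < ‖c‖) :
    (p - C c * X ^ p.natDegree).natDegree = p.natDegree := by
  refine natDegree_eq_of_le_of_coeff_ne_zero
    ((natDegree_sub_le _ _).trans (max_le le_rfl (natDegree_C_mul_X_pow_le _ _))) ?_
  rw [coeff_sub, coeff_C_mul_X_pow, if_pos rfl, sub_ne_zero]
  rintro h
  have := norm_leadingCoeff_le_maxMod p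
  rw [leadingCoeff, h] at this
  linarith

theorem eval_polarDeriv_sub_C_mul_X_pow
    (h : (p - C c * X ^ p.natDegree).natDegree = p.natDegree) (z : ℂ) :
    (polarDeriv (p - C c * X ^ p.natDegree) 0).eval z = (polarDeriv p 0).eval z := by
  simp only [eval_polarDeriv_zero, h, derivative_sub, derivative_C_mul_X_pow, eval_sub, eval_mul,
    eval_C, eval_pow, eval_X]
  rcases Nat.eq_zero_or_pos p.natDegree with hn | hn
  · simp [hn]
  · rw [← mul_pow_sub_one hn.ne' z]
    ring

end Perturbation

section PolarDerivativeUpperBound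

variable {p : ℂ[X]} {z : ℂ}

theorem norm_eval_polarDeriv_le_abs_sub_mul (hp : p ≠ 0) (hz : ‖z‖ = 1) {t : ℝ} (ht : 1 < t) :
    ‖(polarDeriv p 0).eval z‖ ≤
      |‖(derivative p).eval z‖ - t * (p.natDegree * maxMod p 1)| := by
  set n := p.natDegree
  set M := maxMod p 1
  set A := ‖(derivative p).eval z‖
  set u := Complex.exp (((derivative p).eval z).arg * Complex.I)
  have hu : ‖u‖ = 1 := Complex.norm_exp_ofReal_mul_I _
  have hAu : (A : ℂ) * u = (derivative p).eval z := Complex.norm_mul_exp_arg_mul_I _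
  have hz0 : z ≠ 0 := norm_ne_zero_iff.1 (hz ▸ one_ne_zero)
  -- chosen so that `c * n * z ^ (n - 1) = t * n * M * u`, making `s'(z)` a real multiple of `u`
  set c : ℂ := t * M * u / z ^ (n - 1)
  have hc : M < ‖c‖ := by
    have hM : 0 < M := maxMod_pos hp
    simp only [c, norm_div, norm_mul, hu, norm_pow, hz, one_pow, div_one, mul_one,
      Complex.norm_real, Real.norm_of_nonneg hM.le, Real.norm_of_nonneg (by linarith : 0 ≤ t)]
    exact lt_mul_of_one_lt_left hM ht
  set s := p - C c * X ^ n
  have hs : s.natDegree = n := natDegree_sub_C_mul_X_pow hc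
  have hderiv : (derivative s).eval z = ((A - t * (n * M) : ℝ) : ℂ) * u := by
    simp only [s, derivative_sub, derivative_C_mul_X_pow, eval_sub, eval_mul, eval_C, eval_pow,
      eval_X, c, ← hAu]
    field_simp
    push_cast
    ring
  calc ‖(polarDeriv p 0).eval z‖ = ‖(polarDeriv s 0).eval z‖ := by
          rw [eval_polarDeriv_sub_C_mul_X_pow hs]
    _ ≤ ‖(derivative s).eval z‖ := norm_eval_polarDeriv_le_norm_eval_derivative
          (fun r hr => norm_le_one_of_isRoot_sub_C_mul_X_pow hc hr) hz
    _ = |A - t * (n * M)| := by rw [hderiv, norm_mul, hu, mul_one, Complex.norm_real,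
          Real.norm_eq_abs]

theorem norm_eval_polarDeriv_le_abs_sub (hp : p ≠ 0) (hz : ‖z‖ = 1) :
    ‖(polarDeriv p 0).eval z‖ ≤ |‖(derivative p).eval z‖ - p.natDegree * maxMod p 1| := by
  have hcont : Continuous fun t : ℝ =>
      |‖(derivative p).eval z‖ - t * (p.natDegree * maxMod p 1)| := by fun_prop
  have hlim := (hcont.tendsto 1).mono_left (nhdsWithin_le_nhds (s := Set.Ioi 1))
  rw [one_mul] at hlim
  exact ge_of_tendsto hlim (eventually_nhdsWithin_of_forall fun t ht =>
    norm_eval_polarDeriv_le_abs_sub_mul hp hz ht)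

end PolarDerivativeUpperBound

theorem stmt5 (p : Polynomial ℂ) (n : ℕ) (hn : p.natDegree = n) (k : ℝ)
    (hk : 1 ≤ k)
    (hz : ∀ z : ℂ, p.IsRoot z → k ≤ ‖z‖) :
    maxMod (derivative p) 1 ≤ (n / (1 + k)) * maxMod p 1 := by
  rcases eq_or_ne n 0 with rfl | hn0
  · simp [derivative_of_natDegree_zero hn, maxMod_zero]
  have hp : p ≠ 0 := by rintro rfl; exact hn0 hn.symm
  have hnM : 0 < n * maxMod p 1 := mul_pos (by positivity) (maxMod_pos hp)
  refine maxMod_le zero_le_one fun z hz1 => ?_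
  have hlower := mul_norm_eval_derivative_le_norm_eval_polarDeriv hk hz hz1
  have hupper := norm_eval_polarDeriv_le_abs_sub hp hz1
  rw [hn] at hupper
  have hA := norm_nonneg ((derivative p).eval z)
  rw [div_mul_eq_mul_div, le_div_iff₀ (by linarith)]
  rcases le_abs.1 (hlower.trans hupper) with h | h
  · nlinarith [mul_nonneg (sub_nonneg.2 hk) hA]
  · linarith
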